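/- Let Δ_sym = I − D^{-1/2} A D^{-1/2} be the symmetrically normalized Laplacian of a finite undirected weighted simple graph without isolated nodes, and for γ > 0 let Δ̃_sym = I − D̃^{-1/2}(A + γI)D̃^{-1/2} where D̃ = D + γI. If λ_n and λ̃_n denote the largest eigenvalues of Δ_sym and Δ̃_sym respectively, then λ̃_n ≤ (g/(g+γ)) λ_n where g = maxᵢ Dᵢᵢ; in particular λ̃_n < λ_n whenever λ_n > 0. -/

import Mathlib

open Matrix

lemma dot_rayleigh_le_sup {m : ℕ} {M : Matrix (Fin (m+1)) (Fin (m+1)) ℝ}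
    (hM : M.IsHermitian) (x : Fin (m+1) → ℝ) :
    x ⬝ᵥ (M *ᵥ x) ≤ (Finset.univ.sup' Finset.univ_nonempty hM.eigenvalues) * (x ⬝ᵥ x) := by
  set L := Finset.univ.sup' Finset.univ_nonempty hM.eigenvalues with hL
  set U : Matrix (Fin (m+1)) (Fin (m+1)) ℝ := (hM.eigenvectorUnitary : Matrix (Fin (m+1)) (Fin (m+1)) ℝ) with hUdef
  set y : Fin (m+1) → ℝ := star U *ᵥ x with hy
  have hdot : ∀ z, x ⬝ᵥ (U *ᵥ z) = y ⬝ᵥ z := by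
    intro z
    rw [Matrix.dotProduct_mulVec]
    congr 1
    funext i
    simp [hy, Matrix.vecMul, Matrix.mulVec, dotProduct, mul_comm]
  have hdiag : diagonal ((RCLike.ofReal : ℝ → ℝ) ∘ hM.eigenvalues) = diagonal hM.eigenvalues := by
    congr 1
  have h1 : x ⬝ᵥ (M *ᵥ x) = ∑ i, hM.eigenvalues i * (y i * y i) := by
    conv_lhs => rw [hM.spectral_theorem, Unitary.conjStarAlgAut_apply, hdiag, ← hUdef]
    rw [← Matrix.mulVec_mulVec, ← Matrix.mulVec_mulVec, hdot, ← hy]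
    simp only [Matrix.mulVec_diagonal, dotProduct]
    exact Finset.sum_congr rfl fun i _ => by ring
  have h2 : x ⬝ᵥ x = ∑ i, y i * y i := by
    have hu : U * star U = 1 := Matrix.mem_unitaryGroup_iff.mp hM.eigenvectorUnitary.2
    calc x ⬝ᵥ x = x ⬝ᵥ ((U * star U) *ᵥ x) := by rw [hu, Matrix.one_mulVec]
    _ = y ⬝ᵥ y := by rw [← Matrix.mulVec_mulVec, hdot]
    _ = ∑ i, y i * y i := rfl
  rw [h1, h2, Finset.mul_sum]
  apply Finset.sum_le_sum
  intro i _
  have h3 : hM.eigenvalues i ≤ L := Finset.le_sup' _ (Finset.mem_univ i)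
  nlinarith [mul_self_nonneg (y i)]

lemma exists_sup_eigen_witness {m : ℕ} {M : Matrix (Fin (m+1)) (Fin (m+1)) ℝ}
    (hM : M.IsHermitian) :
    ∃ x : Fin (m+1) → ℝ, 0 < x ⬝ᵥ x ∧
      x ⬝ᵥ (M *ᵥ x) = (Finset.univ.sup' Finset.univ_nonempty hM.eigenvalues) * (x ⬝ᵥ x) := by
  obtain ⟨i, -, hi⟩ := Finset.exists_mem_eq_sup' Finset.univ_nonempty hM.eigenvalues
  refine ⟨⇑(hM.eigenvectorBasis i), ?_, ?_⟩
  · have hne : (⇑(hM.eigenvectorBasis i) : Fin (m+1) → ℝ) ≠ 0 :=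
      by simpa using hM.eigenvectorBasis.orthonormal.ne_zero i
    obtain ⟨j, hj⟩ := Function.ne_iff.mp hne
    apply Finset.sum_pos' (fun k _ => mul_self_nonneg _) ⟨j, Finset.mem_univ j, ?_⟩
    exact mul_self_pos.mpr hj
  · rw [hM.mulVec_eigenvectorBasis, dotProduct_smul, hi, smul_eq_mul]

lemma quad_dot_pair {m : ℕ} (A : Matrix (Fin (m+1)) (Fin (m+1)) ℝ)
    (w : Fin (m+1) → ℝ) (hw : ∀ i, 0 < w i) (c : ℝ) (u : Fin (m+1) → ℝ) :
    ((fun i => Real.sqrt (w i) * u i) ⬝ᵥ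
      ((1 - Matrix.diagonal (fun i => 1 / Real.sqrt (w i)) * (A + c • 1) *
        Matrix.diagonal (fun i => 1 / Real.sqrt (w i))) *ᵥ (fun i => Real.sqrt (w i) * u i))
      = (∑ i, (w i - c) * u i ^ 2) - u ⬝ᵥ (A *ᵥ u))
    ∧ (fun i => Real.sqrt (w i) * u i) ⬝ᵥ (fun i => Real.sqrt (w i) * u i)
      = ∑ i, w i * u i ^ 2 := by
  set E : Matrix (Fin (m+1)) (Fin (m+1)) ℝ :=
    Matrix.diagonal (fun i => 1 / Real.sqrt (w i)) with hE
  set x : Fin (m+1) → ℝ := fun i => Real.sqrt (w i) * u i with hx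
  have hs : ∀ i, Real.sqrt (w i) ≠ 0 := fun i => by
    have := Real.sqrt_pos.mpr (hw i); linarith
  have hms : ∀ i, Real.sqrt (w i) * Real.sqrt (w i) = w i :=
    fun i => Real.mul_self_sqrt (hw i).le
  have hEx : E *ᵥ x = u := by
    funext i
    simp only [hE, hx, Matrix.mulVec_diagonal]
    field_simp
    exact mul_div_cancel_left₀ _ (hs i)
  have hxx : x ⬝ᵥ x = ∑ i, w i * u i ^ 2 := by
    simp only [hx, dotProduct]
    refine Finset.sum_congr rfl fun i _ => ?_
    have := hms i; nlinarith [hms i]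
  have hxE : ∀ z, x ⬝ᵥ (E *ᵥ z) = u ⬝ᵥ z := by
    intro z
    simp only [hx, hE, dotProduct, Matrix.mulVec_diagonal]
    refine Finset.sum_congr rfl fun i _ => ?_
    field_simp
    rw [div_eq_iff (hs i)]
    ring
  refine ⟨?_, hxx⟩
  have hBx : (E * (A + c • 1) * E) *ᵥ x = E *ᵥ ((A + c • 1) *ᵥ u) := by
    rw [← Matrix.mulVec_mulVec, hEx, ← Matrix.mulVec_mulVec]
  rw [Matrix.sub_mulVec, dotProduct_sub, Matrix.one_mulVec, hxx, hBx, hxE,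
    Matrix.add_mulVec, dotProduct_add, Matrix.smul_mulVec, Matrix.one_mulVec,
    dotProduct_smul]
  have hsum : (∑ i, (w i - c) * u i ^ 2) = (∑ i, w i * u i ^ 2) - c * (u ⬝ᵥ u) := by
    rw [dotProduct, Finset.mul_sum, ← Finset.sum_sub_distrib]
    exact Finset.sum_congr rfl fun i _ => by ring
  rw [hsum, smul_eq_mul]
  ring

lemma quad_nonneg {m : ℕ} (A : Matrix (Fin (m+1)) (Fin (m+1)) ℝ) (hsym : Aᵀ = A)
    (hnn : ∀ i j, 0 ≤ A i j) (d : Fin (m+1) → ℝ) (hd : ∀ i, d i = ∑ j, A i j)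
    (u : Fin (m+1) → ℝ) :
    u ⬝ᵥ (A *ᵥ u) ≤ ∑ i, d i * u i ^ 2 := by
  have hsym' : ∀ i j, A i j = A j i := fun i j => by conv_lhs => rw [← hsym, Matrix.transpose_apply]
  have e1 : ∑ i, ∑ j, A i j * u i ^ 2 = ∑ i, d i * u i ^ 2 := by
    refine Finset.sum_congr rfl fun i _ => ?_
    rw [← Finset.sum_mul, ← hd]
  have e2 : ∑ i, ∑ j, A i j * u j ^ 2 = ∑ i, d i * u i ^ 2 := by
    rw [Finset.sum_comm]
    refine Finset.sum_congr rfl fun j _ => ?_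
    rw [← Finset.sum_mul]
    congr 1
    rw [hd j]
    exact Finset.sum_congr rfl fun i _ => (hsym' i j)
  have e3 : u ⬝ᵥ (A *ᵥ u) = ∑ i, ∑ j, A i j * u i * u j := by
    simp only [dotProduct, Matrix.mulVec, Finset.mul_sum]
    exact Finset.sum_congr rfl fun i _ => Finset.sum_congr rfl fun j _ => by ring
  have key : ∑ i, ∑ j, A i j * (u i - u j) ^ 2
      = 2 * ((∑ i, d i * u i ^ 2) - u ⬝ᵥ (A *ᵥ u)) := by
    have expand : ∑ i, ∑ j, A i j * (u i - u j) ^ 2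
        = (∑ i, ∑ j, A i j * u i ^ 2) + (∑ i, ∑ j, A i j * u j ^ 2)
          - 2 * ∑ i, ∑ j, A i j * u i * u j := by
      rw [← Finset.sum_add_distrib, Finset.mul_sum, ← Finset.sum_sub_distrib]
      refine Finset.sum_congr rfl fun i _ => ?_
      rw [← Finset.sum_add_distrib, Finset.mul_sum, ← Finset.sum_sub_distrib]
      exact Finset.sum_congr rfl fun j _ => by ring
    rw [expand, e1, e2, e3]
    ring
  have hpos : 0 ≤ ∑ i, ∑ j, A i j * (u i - u j) ^ 2 :=
    Finset.sum_nonneg fun i _ => Finset.sum_nonneg fun j _ =>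
      mul_nonneg (hnn i j) (sq_nonneg _)
  linarith [key ▸ hpos]

/-- Comparison of the largest eigenvalues of the normalized Laplacian and its
self-loop-augmented version: `λ̃_n ≤ (g/(g+γ)) λ_n` with `g = maxᵢ Dᵢᵢ`, and in
particular `λ̃_n < λ_n` whenever `λ_n > 0`. -/
theorem augmented_laplacian_largest_eigenvalue_shrinks {n : ℕ}
    (A : Matrix (Fin (n + 1)) (Fin (n + 1)) ℝ) (hsym : Aᵀ = A)
    (hnn : ∀ i j, 0 ≤ A i j) (hdiag : ∀ i, A i i = 0)
    (d : Fin (n + 1) → ℝ) (hd : ∀ i, d i = ∑ j, A i j) (hdpos : ∀ i, 0 < d i)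
    (γ : ℝ) (hγ : 0 < γ)
    (Δ Δt : Matrix (Fin (n + 1)) (Fin (n + 1)) ℝ)
    (hΔ : Δ = 1 - Matrix.diagonal (fun i => 1 / Real.sqrt (d i)) * A *
      Matrix.diagonal (fun i => 1 / Real.sqrt (d i)))
    (hΔt : Δt = 1 - Matrix.diagonal (fun i => 1 / Real.sqrt (d i + γ)) * (A + γ • 1) *
      Matrix.diagonal (fun i => 1 / Real.sqrt (d i + γ)))
    (hH : Δ.IsHermitian) (hHt : Δt.IsHermitian)
    (g : ℝ) (hg : g = Finset.univ.sup' Finset.univ_nonempty d)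
    (lamn lamtn : ℝ)
    (hlam : lamn = Finset.univ.sup' Finset.univ_nonempty hH.eigenvalues)
    (hlamt : lamtn = Finset.univ.sup' Finset.univ_nonempty hHt.eigenvalues) :
    lamtn ≤ (g / (g + γ)) * lamn ∧ (0 < lamn → lamtn < lamn) := by
  have hΔ' : Δ = 1 - Matrix.diagonal (fun i => 1 / Real.sqrt (d i)) * (A + (0:ℝ) • 1) *
      Matrix.diagonal (fun i => 1 / Real.sqrt (d i)) := by
    rw [hΔ, zero_smul, add_zero]
  have hdγ : ∀ i, 0 < d i + γ := fun i => by linarith [hdpos i]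
  have hdg : ∀ i, d i ≤ g := fun i => hg ▸ Finset.le_sup' d (Finset.mem_univ i)
  have hgpos : 0 < g := lt_of_lt_of_le (hdpos 0) (hdg 0)
  have hgγ : (0:ℝ) < g + γ := by linarith
  have hsd : ∀ i, Real.sqrt (d i) ≠ 0 := fun i => by
    have := Real.sqrt_pos.mpr (hdpos i); linarith
  have hsdγ : ∀ i, Real.sqrt (d i + γ) ≠ 0 := fun i => by
    have := Real.sqrt_pos.mpr (hdγ i); linarith
  -- λn is nonnegative
  have hlamn_nonneg : 0 ≤ lamn := by
    obtain ⟨x, hx0, hxval⟩ := exists_sup_eigen_witness hH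
    rw [← hlam] at hxval
    set v : Fin (n+1) → ℝ := fun i => x i / Real.sqrt (d i) with hv
    have hxf : (fun i => Real.sqrt (d i) * v i) = x := by
      funext i; rw [hv, mul_comm, div_mul_cancel₀ _ (hsd i)]
    have hp := quad_dot_pair A d hdpos 0 v
    rw [hxf, ← hΔ'] at hp
    have hQ := quad_nonneg A hsym hnn d hd v
    have h1 : x ⬝ᵥ (Δ *ᵥ x) = (∑ i, d i * v i ^ 2) - v ⬝ᵥ (A *ᵥ v) := by
      rw [hp.1]; congr 1; exact Finset.sum_congr rfl fun i _ => by ring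
    nlinarith [hxval, hx0, h1, hQ]
  -- main witness for Δt
  obtain ⟨x, hx0, hxval⟩ := exists_sup_eigen_witness hHt
  rw [← hlamt] at hxval
  set u : Fin (n+1) → ℝ := fun i => x i / Real.sqrt (d i + γ) with hu
  have hxf : (fun i => Real.sqrt (d i + γ) * u i) = x := by
    funext i; rw [hu, mul_comm, div_mul_cancel₀ _ (hsdγ i)]
  have hp := quad_dot_pair A (fun i => d i + γ) hdγ γ u
  rw [hxf, ← hΔt] at hp
  set R : ℝ := (∑ i, d i * u i ^ 2) - u ⬝ᵥ (A *ᵥ u) with hR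
  set S : ℝ := ∑ i, d i * u i ^ 2 with hS
  set St : ℝ := ∑ i, (d i + γ) * u i ^ 2 with hSt
  have hp1 : x ⬝ᵥ (Δt *ᵥ x) = R := by
    rw [hp.1, hR, hS]; congr 1; exact Finset.sum_congr rfl fun i _ => by ring
  have hp2 : x ⬝ᵥ x = St := hp.2
  have hSt_pos : 0 < St := hp2 ▸ hx0
  have hmain : lamtn * St = R := by rw [← hp1, ← hp2, hxval]
  -- upper bound for R via λn
  have hq := quad_dot_pair A d hdpos 0 u
  rw [← hΔ'] at hq
  have hub := dot_rayleigh_le_sup hH (fun i => Real.sqrt (d i) * u i)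
  rw [← hlam, hq.1, hq.2] at hub
  have hRS : R ≤ lamn * S := by
    rw [hR, hS]
    calc (∑ i, d i * u i ^ 2) - u ⬝ᵥ (A *ᵥ u)
        = (∑ i, (d i - 0) * u i ^ 2) - u ⬝ᵥ (A *ᵥ u) := by
          congr 1; exact Finset.sum_congr rfl fun i _ => by ring
      _ ≤ lamn * ∑ i, d i * u i ^ 2 := hub
  -- weight comparison
  have hSS : S ≤ (g / (g + γ)) * St := by
    rw [hS, hSt, Finset.mul_sum]
    refine Finset.sum_le_sum fun i _ => ?_
    rw [div_mul_eq_mul_div, le_div_iff₀ hgγ]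
    nlinarith [sq_nonneg (u i), mul_nonneg (sq_nonneg (u i)) (sub_nonneg.mpr (hdg i)), hγ.le]
  have hfinal : lamtn ≤ (g / (g + γ)) * lamn := by
    have h1 : lamtn * St ≤ ((g / (g + γ)) * lamn) * St := by
      calc lamtn * St = R := hmain
        _ ≤ lamn * S := hRS
        _ ≤ lamn * ((g / (g + γ)) * St) := by
            exact mul_le_mul_of_nonneg_left hSS hlamn_nonneg
        _ = ((g / (g + γ)) * lamn) * St := by ring
    exact le_of_mul_le_mul_right h1 hSt_pos
  refine ⟨hfinal, fun hpos => ?_⟩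
  have hlt : g / (g + γ) < 1 := (div_lt_one hgγ).mpr (by linarith)
  calc lamtn ≤ (g / (g + γ)) * lamn := hfinal
    _ < 1 * lamn := by exact mul_lt_mul_of_pos_right hlt hpos
    _ = lamn := one_mul _
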